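/- For a co-Büchi automaton obtained from a weak Büchi automaton by swapping accepting and non-accepting states, the complement of the weak BA's language equals the co-BA's language: L(A_c) = L(A_w), where A_w is weak, A_c has accepting set Q \ Q_F, and acceptance in A_c is co-Büchi. -/

import Mathlib

attribute [local instance] Classical.propDecidable

universe u v

variable {A : Type u} {Q : Type v}

/-- `π` is an (infinite) trace of the transition function `δ` over the word `w`. -/
def IsTrace (δ : Q → A → Set Q) (w : ℕ → A) (π : ℕ → Q) : Prop :=
  ∀ i, π (i + 1) ∈ δ (π i) (w i)

/-- co-Büchi acceptance: only finitely many visits to `F`. -/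
def FinAcc (F : Set Q) (π : ℕ → Q) : Prop := ∃ n, ∀ m ≥ n, π m ∉ F

/-- Büchi acceptance (state-based): infinitely many visits to `F`. -/
def InfAcc (F : Set Q) (π : ℕ → Q) : Prop := ∀ n, ∃ m ≥ n, π m ∈ F

/-- Büchi acceptance with accepting states `F` and accepting transitions `δF`. -/
def BuchiAccT (F : Set Q) (δF : Set (Q × A × Q)) (w : ℕ → A) (π : ℕ → Q) : Prop :=
  ∀ n, ∃ m ≥ n, π m ∈ F ∨ (π m, w m, π (m + 1)) ∈ δF

/-- Successors of a set of states. -/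
def stepSet (δ : Q → A → Set Q) (S : Set Q) (a : A) : Set Q := ⋃ p ∈ S, δ p a

/-- The subset-construction sequence `ρ^B_α`. -/
def subsetSeq (δ : Q → A → Set Q) (w : ℕ → A) (B : Set Q) : ℕ → Set Q
  | 0 => B
  | i + 1 => stepSet δ (subsetSeq δ w B i) (w i)

/-- `Π_ρ`: the traces over `w` matching the sequence of sets `ρ` componentwise. -/
def TraceSet (δ : Q → A → Set Q) (w : ℕ → A) (ρ : ℕ → Set Q) : Set (ℕ → Q) :=
  {π | IsTrace δ w π ∧ ∀ i, π i ∈ ρ i}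

/-- `Π_ρ` contains a (co-Büchi-)accepting trace. -/
def HasAccTrace (δ : Q → A → Set Q) (F : Set Q) (w : ℕ → A) (ρ : ℕ → Set Q) : Prop :=
  ∃ π ∈ TraceSet δ w ρ, FinAcc F π

/-- `Π_ρ^∪` (the union of the trace sets of all suffixes) contains an accepting trace. -/
def HasAccTraceU (δ : Q → A → Set Q) (F : Set Q) (w : ℕ → A) (ρ : ℕ → Set Q) : Prop :=
  ∃ i, HasAccTrace δ F (fun n => w (n + i)) (fun n => ρ (n + i))

/-- Reachability in the automaton. -/
def Reaches (δ : Q → A → Set Q) : Q → Q → Prop :=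
  Relation.ReflTransGen (fun p q => ∃ a, q ∈ δ p a)

/-- The maximal SCC containing `q`. -/
def scc (δ : Q → A → Set Q) (q : Q) : Set Q :=
  {p | Reaches δ p q ∧ Reaches δ q p}

/-- Weak automaton: states of the same SCC agree on acceptance. -/
def IsWeak (δ : Q → A → Set Q) (F : Set Q) : Prop :=
  ∀ p q, Reaches δ p q → Reaches δ q p → (p ∈ F ↔ q ∈ F)

/-- Fair simulation on the co-BA `(Q, δ, _, F, ∅)`. -/
def FairSim (δ : Q → A → Set Q) (F : Set Q) (p q : Q) : Prop :=
  ∀ (w : ℕ → A) (π : ℕ → Q), π 0 = p → IsTrace δ w π → FinAcc F π →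
    ∃ π', π' 0 = q ∧ IsTrace δ w π' ∧ FinAcc F π'

/-- `R` is a direct-simulation relation on the BA `(Q, δ, _, F, ∅)`. -/
def IsDirectSim (δ : Q → A → Set Q) (F : Set Q) (R : Q → Q → Prop) : Prop :=
  ∀ p q, R p q → (p ∈ F → q ∈ F) ∧ ∀ a, ∀ p' ∈ δ p a, ∃ q' ∈ δ q a, R p' q'

/-- `p` is directly simulated by `q`. -/
def DirectSim (δ : Q → A → Set Q) (F : Set Q) (p q : Q) : Prop :=
  ∃ R, IsDirectSim δ F R ∧ R p q

/-- The relation `⊑`: fair simulation refined by the reachability conditions. -/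
def SqSub (δ : Q → A → Set Q) (F : Set Q) (p q : Q) : Prop :=
  FairSim δ F p q ∧ Reaches δ p q ∧ (¬ Reaches δ q p ∨ p = q)

/-- One step of the Miyano–Hayashi-style construction with adjustment function `θ`. -/
noncomputable def mhStep (δ : Q → A → Set Q) (F : Set Q) (θ : Set Q → Set Q)
    (m : Set Q × Set Q) (a : A) : Set Q × Set Q :=
  let S' := θ (stepSet δ m.1 a)
  (S', if m.2 = ∅ then S' \ F else (stepSet δ m.2 a ∩ S') \ F)

/-- The (unique) run of the deterministic automaton `MiHay_θ(A_c)` on `w`. -/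
noncomputable def mhRun (δ : Q → A → Set Q) (F : Set Q) (θ : Set Q → Set Q)
    (I : Set Q) (w : ℕ → A) : ℕ → Set Q × Set Q
  | 0 => (θ I, θ I \ F)
  | i + 1 => mhStep δ F θ (mhRun δ F θ I w i) (w i)

/-- `MiHay_θ(A_c)` accepts `w`: the `B`-component is empty infinitely often. -/
def MhAccepts (δ : Q → A → Set Q) (F : Set Q) (θ : Set Q → Set Q)
    (I : Set Q) (w : ℕ → A) : Prop :=
  ∀ n, ∃ m ≥ n, (mhRun δ F θ I w m).2 = (∅ : Set Q)

/-- `w ∈ L(A_c)` for the co-BA `A_c = (Q, δ, I, F, ∅)`. -/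
def CoBuchiLang (δ : Q → A → Set Q) (I F : Set Q) (w : ℕ → A) : Prop :=
  ∃ π, π 0 ∈ I ∧ IsTrace δ w π ∧ FinAcc F π

/-- `w ∈ L(A)` for the BA `A = (Q, δ, I, F, δF)`. -/
def BuchiLang (δ : Q → A → Set Q) (I F : Set Q) (δF : Set (Q × A × Q)) (w : ℕ → A) : Prop :=
  ∃ π, π 0 ∈ I ∧ IsTrace δ w π ∧ BuchiAccT F δF w π

/-- Macrostates `(N, C, S, B)` of the NCSB-MaxRank construction. -/
abbrev Macro (Q : Type v) := Set Q × Set Q × Set Q × Set Q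

/-- The successor relation `δ'` of NCSB-MaxRank. -/
noncomputable def NcsbSucc (δ : Q → A → Set Q) (Q1 Q2 F : Set Q) (δF : Set (Q × A × Q))
    (m : Macro Q) (a : A) (m' : Macro Q) : Prop :=
  (¬ ∃ p ∈ m.2.2.1, ∃ q ∈ δ p a, (p, a, q) ∈ δF) ∧
  (let N' := stepSet δ m.1 a ∩ Q1
   let S' := stepSet δ m.2.2.1 a
   let C' := ((stepSet δ m.1 a ∩ Q2) ∪ stepSet δ m.2.1 a) \ S'
   let B' := if m.2.2.2 = ∅ then C' else stepSet δ m.2.2.2 a ∩ C'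
   m' = (N', C', S', B') ∨ (B' ∩ F = ∅ ∧ m' = (N', C' \ (S' ∪ B'), S' ∪ B', (∅ : Set Q))))

/-- Well-formed macrostates of NCSB-MaxRank. -/
def NcsbState (Q1 Q2 F : Set Q) (m : Macro Q) : Prop :=
  m.1 ⊆ Q1 ∧ m.2.1 ⊆ Q2 ∧ m.2.2.1 ⊆ Q2 \ F ∧ m.2.2.2 ⊆ m.2.1

/-- `R` is a run of `NCSB-MaxRank(A)` on `w`. -/
noncomputable def NcsbRun (δ : Q → A → Set Q) (Q1 Q2 I F : Set Q) (δF : Set (Q × A × Q))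
    (w : ℕ → A) (R : ℕ → Macro Q) : Prop :=
  R 0 = (Q1 ∩ I, Q2 ∩ I, (∅ : Set Q), Q2 ∩ I) ∧
  (∀ i, NcsbState Q1 Q2 F (R i)) ∧
  ∀ i, NcsbSucc δ Q1 Q2 F δF (R i) (w i) (R (i + 1))

/-- A run of `NCSB-MaxRank(A)` is accepting: `B = ∅` infinitely often. -/
def NcsbAcc (R : ℕ → Macro Q) : Prop := ∀ n, ∃ m ≥ n, (R m).2.2.2 = (∅ : Set Q)

/-! A trace of a finite automaton visits some state `q` infinitely often, so from the first
visit to `q` on, every state it passes through reaches `q` and is reached from `q`: the trace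
stays in the SCC of `q`. In a weak automaton all states of that SCC agree on membership in `F`,
so the trace eventually stays inside `F` or eventually stays outside it; infinitely many visits
to `F` rule out the second case. -/

open Filter

section

variable {δ : Q → A → Set Q} {F : Set Q} {w : ℕ → A} {π : ℕ → Q}

theorem finAcc_iff_eventually : FinAcc F π ↔ ∀ᶠ n in atTop, π n ∉ F :=
  eventually_atTop.symm

theorem infAcc_iff_frequently : InfAcc F π ↔ ∃ᶠ n in atTop, π n ∈ F :=
  frequently_atTop.symm

theorem infAcc_of_finAcc_compl (h : FinAcc Fᶜ π) : InfAcc F π := by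
  rw [finAcc_iff_eventually] at h
  rw [infAcc_iff_frequently]
  simpa only [Set.notMem_compl_iff] using h.frequently

theorem exists_frequently_eq {α : Type*} {l : Filter α} [l.NeBot] [Finite Q] (f : α → Q) :
    ∃ q, ∃ᶠ x in l, f x = q :=
  frequently_exists.mp (Frequently.of_forall fun x => ⟨f x, rfl⟩)

theorem IsTrace.reaches (ht : IsTrace δ w π) {i j : ℕ} (hij : i ≤ j) :
    Reaches δ (π i) (π j) := by
  induction j, hij using Nat.le_induction with
  | base => exact .refl
  | succ j _ ih => exact ih.tail ⟨w j, ht j⟩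

theorem IsTrace.exists_eventually_mem_scc [Finite Q] (ht : IsTrace δ w π) :
    ∃ q, ∀ᶠ n in atTop, π n ∈ scc δ q := by
  obtain ⟨q, hq⟩ := exists_frequently_eq (l := atTop) π
  obtain ⟨n₀, hn₀⟩ := hq.exists
  refine ⟨q, eventually_atTop.2 ⟨n₀, fun i hi => ⟨?_, hn₀ ▸ ht.reaches hi⟩⟩⟩
  obtain ⟨m, hm, hmq⟩ := frequently_atTop.1 hq i
  exact hmq ▸ ht.reaches hm

theorem IsWeak.mem_iff_of_mem_scc (hweak : IsWeak δ F) {p q : Q} (hp : p ∈ scc δ q) :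
    p ∈ F ↔ q ∈ F :=
  hweak p q hp.1 hp.2

theorem IsTrace.finAcc_compl_of_infAcc [Finite Q] (hweak : IsWeak δ F) (ht : IsTrace δ w π)
    (hinf : InfAcc F π) : FinAcc Fᶜ π := by
  obtain ⟨q, hscc⟩ := ht.exists_eventually_mem_scc
  rw [infAcc_iff_frequently] at hinf
  obtain ⟨n, hn, hnF⟩ := (hscc.and_frequently hinf).exists
  have hq : q ∈ F := (hweak.mem_iff_of_mem_scc hn).1 hnF
  rw [finAcc_iff_eventually]
  filter_upwards [hscc] with m hm
  simpa only [Set.notMem_compl_iff] using (hweak.mem_iff_of_mem_scc hm).2 hq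

theorem IsTrace.finAcc_compl_iff_infAcc [Finite Q] (hweak : IsWeak δ F) (ht : IsTrace δ w π) :
    FinAcc Fᶜ π ↔ InfAcc F π :=
  ⟨infAcc_of_finAcc_compl, ht.finAcc_compl_of_infAcc hweak⟩

end

/-- For a weak BA `A_w = (Q, δ, I, F, ∅)` and the co-BA `A_c = (Q, δ, I, Fᶜ, ∅)`
obtained by swapping accepting and non-accepting states, `L(A_c) = L(A_w)`. -/
theorem weak_swap_lang_eq [Finite Q]
    (δ : Q → A → Set Q) (I F : Set Q) (hweak : IsWeak δ F) :
    ∀ w : ℕ → A,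
      (∃ π, π 0 ∈ I ∧ IsTrace δ w π ∧ FinAcc (Fᶜ) π) ↔
        (∃ π, π 0 ∈ I ∧ IsTrace δ w π ∧ InfAcc F π) := by
  exact fun _ => exists_congr fun _ =>
    and_congr_right fun _ => and_congr_right fun ht => ht.finAcc_compl_iff_infAcc hweak
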